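/- Let A be a unital C*-algebra and x ∈ A. Then w(x) < 1/2 if and only if 1 + z·x + z̄·x* is positive and invertible in A for every complex number z of modulus 1. -/

import Mathlib

/-!
Write `a_z = 1 + z • x + z̄ • x⋆`. Every state `φ` is hermitian, so `φ (a_z) = 1 + 2 Re (z φ(x))`,
and as `z` runs over the unit circle the minimum of this is `1 - 2 |φ(x)|`. Since every point of
the spectrum of a self-adjoint element is the value of some state at it (a character of the
C⋆-algebra it generates, extended by Hahn–Banach and made hermitian), `w(x) < 1/2` gives
`a_z ≥ 1 - 2 w(x) > 0`. Conversely, if all `a_z` are strictly positive, compactness of the circle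
gives a common lower bound `a_z ≥ ε > 0`, and evaluating a state `φ` at the `a_z` that minimises
`φ (a_z)` yields `|φ(x)| ≤ (1 - ε) / 2`.
-/

open scoped ComplexOrder

/-- A state on a unital C*-algebra: a unital positive linear functional. -/
def IsState {A : Type*} [CStarAlgebra A] (φ : A →ₗ[ℂ] ℂ) : Prop :=
  φ 1 = 1 ∧ ∀ a : A, 0 ≤ φ (star a * a)

/-- The numerical radius `w(x) = sup {|s(x)| : s a state of A}`. -/
noncomputable def numRadius {A : Type*} [CStarAlgebra A] (x : A) : ℝ :=
  sSup {r : ℝ | ∃ φ : A →ₗ[ℂ] ℂ, IsState φ ∧ r = ‖φ x‖}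

lemma Complex.exists_norm_eq_one_mul_eq_neg_norm (u : ℂ) :
    ∃ z : ℂ, ‖z‖ = 1 ∧ z * u = -‖u‖ := by
  refine ⟨-exp (↑(-u.arg) * I), by rw [norm_neg, norm_exp_ofReal_mul_I], ?_⟩
  conv_lhs => rw [← norm_mul_exp_arg_mul_I u]
  rw [neg_mul, mul_left_comm, ← exp_add]
  push_cast
  simp

section

variable {A : Type*} [CStarAlgebra A]

lemma LinearMap.map_algebraMap_real_of_map_one {φ : A →ₗ[ℂ] ℂ} (h1 : φ 1 = 1) (r : ℝ) :
    φ (algebraMap ℝ A r) = r := by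
  rw [Algebra.algebraMap_eq_smul_one, ← Complex.coe_smul, map_smul, h1, Complex.coe_smul,
    Complex.real_smul, mul_one]

lemma isSelfAdjoint_one_add_smul_add_smul_star (x : A) (z : ℂ) :
    IsSelfAdjoint (1 + z • x + (starRingEnd ℂ z) • star x) := by
  simp only [IsSelfAdjoint, star_add, star_one, star_smul, star_star, Complex.star_def,
    Complex.conj_conj]
  abel

lemma numRadius_le {x : A} {c : ℝ} (hc : 0 ≤ c)
    (h : ∀ φ : A →ₗ[ℂ] ℂ, IsState φ → ‖φ x‖ ≤ c) : numRadius x ≤ c :=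
  Real.sSup_le (by rintro _ ⟨φ, hφ, rfl⟩; exact h φ hφ) hc

variable [PartialOrder A] [StarOrderedRing A]

namespace IsState

variable {φ : A →ₗ[ℂ] ℂ}

lemma map_nonneg (hφ : IsState φ) {a : A} (ha : 0 ≤ a) : 0 ≤ φ a := by
  obtain ⟨s, rfl⟩ := CStarAlgebra.nonneg_iff_eq_star_mul_self.mp ha
  exact hφ.2 s

noncomputable def toPositiveLinearMap (hφ : IsState φ) : A →ₚ[ℂ] ℂ :=
  .mk₀ φ fun _ ↦ hφ.map_nonneg

@[simp]
lemma coe_toPositiveLinearMap (hφ : IsState φ) : ⇑hφ.toPositiveLinearMap = φ := rfl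

lemma map_star (hφ : IsState φ) (a : A) : φ (star a) = star (φ a) :=
  StarHomClass.map_star hφ.toPositiveLinearMap a

lemma mono (hφ : IsState φ) {a b : A} (hab : a ≤ b) : φ a ≤ φ b :=
  OrderHomClass.mono hφ.toPositiveLinearMap hab

lemma norm_apply_le (hφ : IsState φ) (a : A) : ‖φ a‖ ≤ 4 * ‖a‖ := by
  obtain ⟨y, hy_nonneg, hy_norm, ha⟩ := CStarAlgebra.exists_sum_four_nonneg a
  have hy (i : Fin 4) : ‖φ (y i)‖ ≤ ‖a‖ := by
    have := hφ.toPositiveLinearMap.norm_apply_le_of_nonneg (y i) (hy_nonneg i)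
    simp only [coe_toPositiveLinearMap, hφ.1, norm_one, one_mul] at this
    exact this.trans (hy_norm i)
  conv_lhs => rw [ha, map_sum]
  refine (norm_sum_le _ _).trans ?_
  simpa [norm_smul] using Finset.sum_le_sum fun i (_ : i ∈ Finset.univ) ↦ hy i

lemma norm_apply_le_numRadius (hφ : IsState φ) (x : A) : ‖φ x‖ ≤ numRadius x :=
  le_csSup ⟨4 * ‖x‖, by rintro _ ⟨ψ, hψ, rfl⟩; exact hψ.norm_apply_le x⟩ ⟨φ, hφ, rfl⟩

lemma apply_one_add_smul_add_smul_star (hφ : IsState φ) (x : A) (z : ℂ) :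
    φ (1 + z • x + (starRingEnd ℂ z) • star x) = ((1 + 2 * (z * φ x).re : ℝ) : ℂ) := by
  rw [map_add, map_add, hφ.1, map_smul, map_smul, hφ.map_star, smul_eq_mul, smul_eq_mul,
    add_assoc, Complex.star_def, ← map_mul, Complex.add_conj]
  push_cast
  ring

end IsState

lemma isState_of_norm_le {φ : A →ₗ[ℂ] ℂ} (h1 : φ 1 = 1) (hnorm : ∀ a, ‖φ a‖ ≤ ‖a‖)
    (hstar : ∀ a, φ (star a) = star (φ a)) : IsState φ := by
  refine ⟨h1, fun a ↦ ?_⟩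
  have hc : 0 ≤ star a * a := star_mul_self_nonneg a
  set c := star a * a
  have him : (φ c).im = 0 := by
    have := hstar c
    rw [hc.isSelfAdjoint.star_eq] at this
    exact Complex.conj_eq_iff_im.mp this.symm
  -- `0 ≤ ‖c‖ - c ≤ ‖c‖`, so contractivity bounds `Re φ (‖c‖ - c) = ‖c‖ - Re φ c` by `‖c‖`.
  have hd : ‖algebraMap ℝ A ‖c‖ - c‖ ≤ ‖c‖ := by
    rw [CStarAlgebra.norm_le_iff_le_algebraMap _ (norm_nonneg c)
      (sub_nonneg.mpr hc.isSelfAdjoint.le_algebraMap_norm_self)]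
    simpa using hc
  have hre := (Complex.re_le_norm _).trans ((hnorm _).trans hd)
  rw [map_sub, LinearMap.map_algebraMap_real_of_map_one h1, Complex.sub_re,
    Complex.ofReal_re] at hre
  exact Complex.nonneg_iff.mpr ⟨by linarith, him.symm⟩

lemma exists_isState_re_eq_of_norm_le {g : A →ₗ[ℂ] ℂ} (h1 : g 1 = 1)
    (hnorm : ∀ a, ‖g a‖ ≤ ‖a‖) :
    ∃ φ : A →ₗ[ℂ] ℂ, IsState φ ∧ ∀ a, IsSelfAdjoint a → φ a = (g a).re := by
  let φ : A →ₗ[ℂ] ℂ := (2⁻¹ : ℂ) • (g + (star (WithConv.toConv g)).ofConv)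
  have hφ_apply (a : A) : φ a = (g a + star (g (star a))) / 2 := by simp [φ]; ring
  refine ⟨φ, isState_of_norm_le ?_ (fun a ↦ ?_) (fun a ↦ ?_), fun a ha ↦ ?_⟩
  · simp [hφ_apply, h1]
  · calc ‖φ a‖ ≤ (‖g a‖ + ‖g (star a)‖) / 2 := by
          rw [hφ_apply, norm_div, Complex.norm_two]
          gcongr
          exact (norm_add_le _ _).trans_eq (by rw [norm_star])
      _ ≤ (‖a‖ + ‖star a‖) / 2 := by gcongr <;> apply hnorm
      _ = ‖a‖ := by rw [norm_star]; ring
  · simp [hφ_apply, add_comm]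
  · rw [hφ_apply, ha.star_eq, Complex.star_def, Complex.add_conj]
    push_cast
    ring

open StarAlgebra in
lemma exists_isState_apply_eq_of_mem_spectrum {b : A} (hb : IsSelfAdjoint b) {t : ℝ}
    (ht : t ∈ spectrum ℝ b) : ∃ φ : A →ₗ[ℂ] ℂ, IsState φ ∧ φ b = t := by
  rcases subsingleton_or_nontrivial A with _ | _
  · simp [spectrum.of_subsingleton] at ht
  have : IsStarNormal b := hb.isStarNormal
  obtain ⟨χ, hχ⟩ := (elemental.bijective_characterSpaceToSpectrum b).2
    ⟨t, spectrum.algebraMap_mem ℂ ht⟩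
  let p : Submodule ℂ A := (elemental ℂ b).toSubalgebra.toSubmodule
  let f₀ : p →ₗ[ℂ] ℂ :=
    { toFun x := χ ⟨x, x.2⟩
      map_add' x y := map_add χ ⟨x, x.2⟩ ⟨y, y.2⟩
      map_smul' c x := map_smul χ c ⟨x, x.2⟩ }
  let f : StrongDual ℂ p := f₀.mkContinuous 1 fun x ↦ by
    rw [one_mul]
    exact (spectrum.norm_le_norm_of_mem (AlgHom.apply_mem_spectrum χ ⟨x, x.2⟩) :)
  obtain ⟨g, hgf, hg⟩ := exists_extension_norm_eq p f
  have hg_le (a : A) : ‖g a‖ ≤ ‖a‖ :=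
    (g.le_opNorm a).trans (mul_le_of_le_one_left (norm_nonneg a)
      (hg ▸ LinearMap.mkContinuous_norm_le _ zero_le_one _))
  have hg1 : g 1 = 1 := (hgf ⟨1, one_mem (elemental ℂ b)⟩).trans (map_one χ)
  have hgb : g b = t := (hgf ⟨b, elemental.self_mem ℂ b⟩).trans (congrArg Subtype.val hχ)
  obtain ⟨φ, hφ, hφg⟩ := exists_isState_re_eq_of_norm_le (g := g.toLinearMap) hg1 hg_le
  exact ⟨φ, hφ, by simp [hφg b hb, hgb]⟩

lemma algebraMap_le_of_forall_isState {b : A} (hb : IsSelfAdjoint b) {r : ℝ}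
    (h : ∀ φ : A →ₗ[ℂ] ℂ, IsState φ → (r : ℂ) ≤ φ b) : algebraMap ℝ A r ≤ b := by
  refine (algebraMap_le_iff_le_spectrum hb).mpr fun t ht ↦ ?_
  obtain ⟨φ, hφ, hφb⟩ := exists_isState_apply_eq_of_mem_spectrum hb ht
  exact_mod_cast hφb ▸ h φ hφ

open Filter Topology in
lemma exists_pos_forall_algebraMap_le {X : Type*} [TopologicalSpace X] [CompactSpace X]
    {f : X → A} (hf : Continuous f) (h : ∀ x, IsStrictlyPositive (f x)) :
    ∃ ε > 0, ∀ x, algebraMap ℝ A ε ≤ f x := by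
  rcases subsingleton_or_nontrivial A with _ | _
  · exact ⟨1, one_pos, fun _ ↦ (Subsingleton.elim _ _).le⟩
  suffices ∀ᶠ ε in 𝓝 (0 : ℝ), ∀ x ∈ Set.univ, algebraMap ℝ A ε ≤ f x by
    obtain ⟨ε, hε, hεf⟩ := this.exists_gt
    exact ⟨ε, hε, fun x ↦ hεf x trivial⟩
  refine isCompact_univ.eventually_forall_of_forall_eventually fun x₀ _ ↦ ?_
  obtain ⟨r, hr, hr_le⟩ := (CFC.exists_pos_algebraMap_le_iff (h x₀).isSelfAdjoint).mpr
    fun _ ↦ (h x₀).spectrum_pos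
  have hε : ∀ᶠ ε in 𝓝 (0 : ℝ), ε < r / 2 := eventually_lt_nhds (by linarith)
  have hx : ∀ᶠ x in 𝓝 x₀, ‖f x - f x₀‖ < r / 2 :=
    hf.continuousAt.eventually (Metric.ball_mem_nhds (f x₀) (half_pos hr)) |>.mono
      fun _ ↦ by simp [dist_eq_norm]
  rw [nhds_prod_eq]
  filter_upwards [hε.prod_mk hx] with ⟨ε, x⟩ ⟨hε, hx⟩
  dsimp only at hε hx ⊢
  calc algebraMap ℝ A ε ≤ algebraMap ℝ A (r - ‖f x - f x₀‖) :=
        algebraMap_mono A (by linarith)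
    _ ≤ f x₀ + (f x - f x₀) := by
        rw [map_sub, sub_eq_add_neg]
        exact add_le_add hr_le
          ((h x).isSelfAdjoint.sub (h x₀).isSelfAdjoint).neg_algebraMap_norm_le_self
    _ = f x := add_sub_cancel _ _

lemma algebraMap_one_sub_two_numRadius_le (x : A) {z : ℂ} (hz : ‖z‖ = 1) :
    algebraMap ℝ A (1 - 2 * numRadius x) ≤ 1 + z • x + (starRingEnd ℂ z) • star x := by
  refine algebraMap_le_of_forall_isState (isSelfAdjoint_one_add_smul_add_smul_star x z)
    fun φ hφ ↦ ?_
  rw [hφ.apply_one_add_smul_add_smul_star, Complex.real_le_real]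
  have := (abs_le.mp ((Complex.abs_re_le_norm (z * φ x)).trans_eq
    (by rw [norm_mul, hz, one_mul]))).1
  linarith [hφ.norm_apply_le_numRadius x]

lemma numRadius_le_of_forall_algebraMap_le {x : A} {ε : ℝ}
    (h : ∀ z : ℂ, ‖z‖ = 1 →
      algebraMap ℝ A ε ≤ 1 + z • x + (starRingEnd ℂ z) • star x) :
    numRadius x ≤ max ((1 - ε) / 2) 0 := by
  refine numRadius_le (le_max_right _ _) fun φ hφ ↦ le_max_of_le_left ?_
  obtain ⟨z, hz, hzφ⟩ := Complex.exists_norm_eq_one_mul_eq_neg_norm (φ x)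
  have := hφ.mono (h z hz)
  rw [LinearMap.map_algebraMap_real_of_map_one hφ.1, hφ.apply_one_add_smul_add_smul_star,
    Complex.real_le_real, hzφ] at this
  simp only [Complex.neg_re, Complex.ofReal_re] at this
  linarith

end

/-- `w(x) < 1/2` iff `1 + z·x + z̄·x*` is positive and invertible for every
unimodular complex number `z`. -/
theorem stmt4 {A : Type*} [CStarAlgebra A] [PartialOrder A] [StarOrderedRing A] (x : A) :
    numRadius x < 1 / 2 ↔
      ∀ z : ℂ, ‖z‖ = 1 →
        0 ≤ 1 + z • x + (starRingEnd ℂ z) • star x ∧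
          IsUnit (1 + z • x + (starRingEnd ℂ z) • star x) := by
  simp only [← IsStrictlyPositive.iff_of_unital]
  constructor
  · intro hw z hz
    exact (isStrictlyPositive_algebraMap (by linarith)).of_le
      (algebraMap_one_sub_two_numRadius_le x hz)
  · intro h
    obtain ⟨ε, hε, hεle⟩ := exists_pos_forall_algebraMap_le
      (f := fun z : Metric.sphere (0 : ℂ) 1 ↦ 1 + (z : ℂ) • x + (starRingEnd ℂ z) • star x)
      (by fun_prop) fun z ↦ h z (by simp)
    refine (numRadius_le_of_forall_algebraMap_le fun z hz ↦ hεle ⟨z, by simpa using hz⟩).trans_lt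
      (max_lt (by linarith) (by norm_num))
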